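/- Suppose lim_{x→a⁺} s(x) = ∞, lim_{x→b} s(x)·M[a,x] = ∞, and μ extends continuously to x = a with a finite value μ(a). Set z₀ := sup_{x∈(a,b)} 1/(s(x)·M[a,x]), which is finite. Then for every z ∈ (0, z₀) there exists a pair (w,y) with a < w < y < b such that (y − w)/(ξ(y) − ξ(w)) = z. -/

import Mathlib

open MeasureTheory Filter Set Topology
open scoped Classical

noncomputable section

/-- The state interval `(a, b)` where `a` is real and `b ∈ (a, ∞]`. -/
def stInt (a : ℝ) (b : EReal) : Set ℝ := {x : ℝ | a < x ∧ (x : EReal) < b}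

/-- The filter of approach to the right endpoint `b ∈ (a, ∞]`:
`atTop` when `b = ∞`, and the left-neighborhood filter of `b` otherwise. -/
def atB (b : EReal) : Filter ℝ :=
  if b = ⊤ then Filter.atTop else nhdsWithin b.toReal (Set.Iio b.toReal)

/-- The scale density `s(x) = exp(-∫_{x₀}^x 2μ/σ²)`. -/
def sDen (μ σ : ℝ → ℝ) (x₀ x : ℝ) : ℝ :=
  Real.exp (-(∫ y in x₀..x, 2 * μ y / (σ y) ^ 2))

/-- The speed density `m(x) = 2/(σ(x)² s(x))`. -/
def mDen (μ σ : ℝ → ℝ) (x₀ x : ℝ) : ℝ :=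
  2 / ((σ x) ^ 2 * sDen μ σ x₀ x)

/-- `M[a,x] = ∫_a^x m(u) du`. -/
def Mab (μ σ : ℝ → ℝ) (x₀ a x : ℝ) : ℝ :=
  ∫ u in Set.Ioo a x, mDen μ σ x₀ u

/-- The time potential `ξ(x) = ∫_{x₀}^x M[a,v] s(v) dv`. -/
def xiF (μ σ : ℝ → ℝ) (x₀ a x : ℝ) : ℝ :=
  ∫ v in x₀..x, Mab μ σ x₀ a v * sDen μ σ x₀ v

/-- The running reward potential `g(x) = ∫_{x₀}^x (∫_a^v c(u) m(u) du) s(v) dv`. -/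
def gF (μ σ c : ℝ → ℝ) (x₀ a x : ℝ) : ℝ :=
  ∫ v in x₀..x, (∫ u in Set.Ioo a v, c u * mDen μ σ x₀ u) * sDen μ σ x₀ v

/-- `h(x) = (∫_a^x (γ c(u) + p μ(u)) m(u) du) / M[a,x]`. -/
def hF (μ σ c : ℝ → ℝ) (x₀ a p γ x : ℝ) : ℝ :=
  (∫ u in Set.Ioo a x, (γ * c u + p * μ u) * mDen μ σ x₀ u) / Mab μ σ x₀ a x

/-- The long-term average reward `F(w,y)` of the `(w,y)`-impulse policy. -/
def FF (μ σ c : ℝ → ℝ) (x₀ a p K γ w y : ℝ) : ℝ :=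
  (p * (y - w) - K + γ * (gF μ σ c x₀ a y - gF μ σ c x₀ a w)) /
    (xiF μ σ x₀ a y - xiF μ σ x₀ a w)

/-- `c̄(b)`: equals `⟨c,π⟩` when `M[a,b] < ∞` and the boundary value `c(b)` otherwise. -/
def cbar (μ σ c : ℝ → ℝ) (x₀ a : ℝ) (b : EReal) (cb : ℝ) : ℝ :=
  if MeasureTheory.IntegrableOn (mDen μ σ x₀) (stInt a b) MeasureTheory.volume then
    (∫ u in stInt a b, c u * mDen μ σ x₀ u) / (∫ u in stInt a b, mDen μ σ x₀ u)
  else cb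

/-! The ratio `(y - w) / (ξ y - ξ w)` is the reciprocal of the slope of `ξ` over `[w, y]`, and
`ξ' = s M` on `(a, b)`. At a point `x` with `1 / (s M)(x) > z`, slopes over short intervals starting
at `x` are close to `ξ'(x) < 1 / z`. Since `s M → ∞` at `b`, the mean value theorem gives slopes
`> 1 / z` over intervals close to `b`. The slope is continuous on the convex, hence connected, set
of pairs `w < y`, so it takes the value `1 / z` somewhere. -/

theorem convex_prod_inter_lt {I : Set ℝ} (hI : I.OrdConnected) :
    Convex ℝ (I ×ˢ I ∩ {p : ℝ × ℝ | p.1 < p.2}) := by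
  refine (hI.convex.prod hI.convex).inter ?_
  simpa only [sub_neg] using convex_halfSpace_lt (f := fun p : ℝ × ℝ => p.1 - p.2)
    (LinearMap.fst ℝ ℝ ℝ - LinearMap.snd ℝ ℝ ℝ).isLinear 0

theorem exists_slope_eq_of_slope_le_of_le_slope {I : Set ℝ} (hI : I.OrdConnected) {ξ : ℝ → ℝ}
    (hξ : ContinuousOn ξ I) {r w₁ y₁ w₂ y₂ : ℝ} (hw₁ : w₁ ∈ I) (hy₁ : y₁ ∈ I) (h₁ : w₁ < y₁)
    (hw₂ : w₂ ∈ I) (hy₂ : y₂ ∈ I) (h₂ : w₂ < y₂) (hr₁ : slope ξ w₁ y₁ ≤ r)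
    (hr₂ : r ≤ slope ξ w₂ y₂) :
    ∃ w y, w ∈ I ∧ y ∈ I ∧ w < y ∧ slope ξ w y = r := by
  have hcont : ContinuousOn (fun p : ℝ × ℝ => slope ξ p.1 p.2) (I ×ˢ I ∩ {p | p.1 < p.2}) := by
    simp only [slope_def_field]
    refine ContinuousOn.div ?_ (continuous_snd.sub continuous_fst).continuousOn
      fun p hp => (sub_pos.2 hp.2).ne'
    exact (hξ.comp continuousOn_snd fun p hp => hp.1.2).sub
      (hξ.comp continuousOn_fst fun p hp => hp.1.1)
  obtain ⟨⟨w, y⟩, ⟨⟨hw, hy⟩, hwy⟩, hslope⟩ :=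
    (convex_prod_inter_lt hI).isPreconnected.intermediate_value
      (a := (w₁, y₁)) (b := (w₂, y₂)) ⟨⟨hw₁, hy₁⟩, h₁⟩ ⟨⟨hw₂, hy₂⟩, h₂⟩ hcont ⟨hr₁, hr₂⟩
  exact ⟨w, y, hw, hy, hwy, hslope⟩

theorem HasDerivAt.exists_slope_lt {ξ : ℝ → ℝ} {f' r x : ℝ} (hξ : HasDerivAt ξ f' x)
    (hr : f' < r) {I : Set ℝ} (hI : I ∈ 𝓝 x) : ∃ y ∈ I, x < y ∧ slope ξ x y < r := by
  have hlim : Tendsto (slope ξ x) (𝓝[>] x) (𝓝 f') :=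
    (hasDerivAt_iff_tendsto_slope_left_right.1 hξ).2
  obtain ⟨y, ⟨hyr, hyI⟩, hxy⟩ := ((hlim.eventually (eventually_lt_nhds hr)).and
    (mem_nhdsWithin_of_mem_nhds hI)).and self_mem_nhdsWithin |>.exists
  exact ⟨y, hyI, hxy, hyr⟩

theorem lt_slope_of_forall_lt_hasDerivAt {ξ f : ℝ → ℝ} {r w y : ℝ} (hwy : w < y)
    (hξ : ∀ t ∈ Icc w y, HasDerivAt ξ (f t) t) (hr : ∀ t ∈ Ioo w y, r < f t) :
    r < slope ξ w y := by
  obtain ⟨c, hc, hfc⟩ := exists_hasDerivAt_eq_slope ξ f hwy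
    (fun t ht => (hξ t ht).continuousAt.continuousWithinAt)
    (fun t ht => hξ t (Ioo_subset_Icc_self ht))
  rw [slope_def_field, ← hfc]
  exact hr c hc

theorem exists_slope_eq_of_hasDerivAt {I : Set ℝ} (hI : IsOpen I) (hIc : I.OrdConnected)
    {ξ f : ℝ → ℝ} (hξ : ∀ x ∈ I, HasDerivAt ξ (f x) x) {r x w y : ℝ} (hx : x ∈ I)
    (hxr : f x < r) (hw : w ∈ I) (hy : y ∈ I) (hwy : w < y) (hwyr : ∀ t ∈ Ioo w y, r < f t) :
    ∃ w' y', w' ∈ I ∧ y' ∈ I ∧ w' < y' ∧ slope ξ w' y' = r := by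
  obtain ⟨x', hx', hxx', hslope⟩ := (hξ x hx).exists_slope_lt hxr (hI.mem_nhds hx)
  exact exists_slope_eq_of_slope_le_of_le_slope hIc
    (fun t ht => (hξ t ht).continuousAt.continuousWithinAt) hx hx' hxx' hw hy hwy hslope.le
    (lt_slope_of_forall_lt_hasDerivAt hwy (fun t ht => hξ t (hIc.out hw hy ht)) hwyr).le

theorem hasDerivAt_intervalIntegral_of_continuousOn {U : Set ℝ} (hU : IsOpen U) {g : ℝ → ℝ}
    (hg : ContinuousOn g U) {c x : ℝ} (hx : x ∈ U) (hint : IntervalIntegrable g volume c x) :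
    HasDerivAt (fun u => ∫ t in c..u, g t) (g x) x :=
  intervalIntegral.integral_hasDerivAt_right hint (hg.stronglyMeasurableAtFilter hU x hx)
    (hg.continuousAt (hU.mem_nhds hx))

theorem hasDerivAt_integral_Ioo_of_continuousOn {U : Set ℝ} (hU : IsOpen U) {g : ℝ → ℝ}
    (hg : ContinuousOn g U) {a x : ℝ} (hx : x ∈ U) (hax : a < x)
    (hint : IntegrableOn g (Ioo a x)) :
    HasDerivAt (fun u => ∫ t in Ioo a u, g t) (g x) x := by
  refine (hasDerivAt_intervalIntegral_of_continuousOn hU hg hx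
    ((intervalIntegrable_iff_integrableOn_Ioo_of_le hax.le).2 hint)).congr_of_eventuallyEq ?_
  filter_upwards [Ioi_mem_nhds hax] with u hu
  rw [intervalIntegral.integral_of_le hu.le, integral_Ioc_eq_integral_Ioo]

theorem isOpen_stInt (a : ℝ) (b : EReal) : IsOpen (stInt a b) :=
  isOpen_Ioi.inter (isOpen_Iio.preimage continuous_coe_real_ereal)

theorem ordConnected_stInt (a : ℝ) (b : EReal) : (stInt a b).OrdConnected :=
  ⟨fun _ hx _ hy _ ht => ⟨hx.1.trans_le ht.1, (EReal.coe_le_coe_iff.2 ht.2).trans_lt hy.2⟩⟩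

theorem exists_Ioo_subset_of_eventually_atB {a : ℝ} {b : EReal} {x₀ : ℝ} (hx₀ : x₀ ∈ stInt a b)
    {p : ℝ → Prop} (hp : ∀ᶠ x in atB b, p x) :
    ∃ w y, w ∈ stInt a b ∧ y ∈ stInt a b ∧ w < y ∧ ∀ t ∈ Ioo w y, p t := by
  by_cases hb : b = ⊤
  · rw [atB, if_pos hb, eventually_atTop] at hp
    obtain ⟨N, hN⟩ := hp
    have hmem : ∀ t, a < t → t ∈ stInt a b := fun t ht => ⟨ht, hb ▸ EReal.coe_lt_top t⟩
    refine ⟨max N a + 1, max N a + 2, hmem _ (by linarith [le_max_right N a]),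
      hmem _ (by linarith [le_max_right N a]), by linarith, fun t ht => hN t ?_⟩
    linarith [le_max_left N a, ht.1]
  · rw [atB, if_neg hb] at hp
    have hB : ((b.toReal : ℝ) : EReal) = b :=
      EReal.coe_toReal hb (ne_bot_of_gt hx₀.2)
    obtain ⟨l, hl, hlp⟩ := mem_nhdsLT_iff_exists_Ioo_subset.1 hp
    have haB : a < b.toReal := hx₀.1.trans (EReal.coe_lt_coe_iff.1 (hB ▸ hx₀.2))
    have hmem : ∀ t, a < t → t < b.toReal → t ∈ stInt a b :=
      fun t hat htB => ⟨hat, hB ▸ EReal.coe_lt_coe_iff.2 htB⟩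
    obtain ⟨w, hw, hwB⟩ := exists_between (max_lt hl haB)
    obtain ⟨y, hwy, hyB⟩ := exists_between hwB
    refine ⟨w, y, hmem w (le_max_right l a |>.trans_lt hw) hwB,
      hmem y (le_max_right l a |>.trans_lt (hw.trans hwy)) hyB, hwy, fun t ht => hlp ?_⟩
    exact ⟨(le_max_left l a).trans_lt (hw.trans ht.1), ht.2.trans hyB⟩

section Densities

variable {μ σ : ℝ → ℝ} {x₀ : ℝ} {U : Set ℝ}

theorem continuousOn_sDen (hU : IsOpen U) (hUc : U.OrdConnected) (hx₀ : x₀ ∈ U)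
    (hμ : ContinuousOn μ U) (hσ : ContinuousOn σ U) (hσ0 : ∀ x ∈ U, σ x ^ 2 ≠ 0) :
    ContinuousOn (sDen μ σ x₀) U := by
  have hdrift : ContinuousOn (fun y => 2 * μ y / σ y ^ 2) U :=
    (continuousOn_const.mul hμ).div (hσ.pow 2) hσ0
  intro x hx
  have hF := hasDerivAt_intervalIntegral_of_continuousOn hU hdrift hx
    (hdrift.mono (hUc.uIcc_subset hx₀ hx)).intervalIntegrable
  exact hF.continuousAt.neg.rexp.continuousWithinAt

theorem continuousOn_mDen (hU : IsOpen U) (hUc : U.OrdConnected) (hx₀ : x₀ ∈ U)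
    (hμ : ContinuousOn μ U) (hσ : ContinuousOn σ U) (hσ0 : ∀ x ∈ U, σ x ^ 2 ≠ 0) :
    ContinuousOn (mDen μ σ x₀) U :=
  continuousOn_const.div ((hσ.pow 2).mul (continuousOn_sDen hU hUc hx₀ hμ hσ hσ0))
    fun x hx => mul_ne_zero (hσ0 x hx) (Real.exp_pos _).ne'

end Densities

theorem statement5_general    (a : ℝ) (b : EReal)
    (μ σ : ℝ → ℝ) (x₀ : ℝ) (hx₀ : x₀ ∈ stInt a b)
    (hμcont : ContinuousOn μ (stInt a b)) (hσcont : ContinuousOn σ (stInt a b))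
    (hσpos : ∀ x ∈ stInt a b, 0 < (σ x) ^ 2)
    (hMfin : ∀ x ∈ stInt a b, IntegrableOn (mDen μ σ x₀) (Set.Ioo a x))
    (hsMb : Tendsto (fun x => sDen μ σ x₀ x * Mab μ σ x₀ a x) (atB b) atTop)
    :
    ∀ z : ℝ, 0 < z →
      z < sSup ((fun x => 1 / (sDen μ σ x₀ x * Mab μ σ x₀ a x)) '' stInt a b) →
      ∃ w y : ℝ, a < w ∧ w < y ∧ (y : EReal) < b ∧
        (y - w) / (xiF μ σ x₀ a y - xiF μ σ x₀ a w) = z := by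
  intro z hz hzsup
  have hU := isOpen_stInt a b
  have hUc := ordConnected_stInt a b
  have hσ0 : ∀ x ∈ stInt a b, σ x ^ 2 ≠ 0 := fun x hx => (hσpos x hx).ne'
  have hm := continuousOn_mDen hU hUc hx₀ hμcont hσcont hσ0
  have hM : ContinuousOn (Mab μ σ x₀ a) (stInt a b) := fun x hx =>
    (hasDerivAt_integral_Ioo_of_continuousOn hU hm hx hx.1
      (hMfin x hx)).continuousAt.continuousWithinAt
  have hf : ContinuousOn (fun x => Mab μ σ x₀ a x * sDen μ σ x₀ x) (stInt a b) :=
    hM.mul (continuousOn_sDen hU hUc hx₀ hμcont hσcont hσ0)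
  have hξ : ∀ x ∈ stInt a b, HasDerivAt (xiF μ σ x₀ a) (sDen μ σ x₀ x * Mab μ σ x₀ a x) x :=
    fun x hx => mul_comm (Mab μ σ x₀ a x) _ ▸ hasDerivAt_intervalIntegral_of_continuousOn hU hf hx
      (hf.mono (hUc.uIcc_subset hx₀ hx)).intervalIntegrable
  obtain ⟨_, ⟨x, hx, rfl⟩, hzx⟩ := exists_lt_of_lt_csSup ((Set.nonempty_of_mem hx₀).image _) hzsup
  have hfx : sDen μ σ x₀ x * Mab μ σ x₀ a x < 1 / z :=
    (lt_one_div hz (one_div_pos.1 (hz.trans hzx))).1 hzx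
  obtain ⟨w₀, y₀, hw₀, hy₀, hwy₀, hfar⟩ :=
    exists_Ioo_subset_of_eventually_atB hx₀ (hsMb.eventually_gt_atTop (1 / z))
  obtain ⟨w, y, hw, hy, hwy, hslope⟩ :=
    exists_slope_eq_of_hasDerivAt hU hUc hξ hx hfx hw₀ hy₀ hwy₀ hfar
  refine ⟨w, y, hw.1, hwy, hy.2, ?_⟩
  rw [← inv_div, ← slope_def_field, hslope, one_div, inv_inv]

theorem statement5    (a : ℝ) (b : EReal) (hab : (a : EReal) < b)
    (μ σ : ℝ → ℝ) (x₀ : ℝ) (hx₀ : x₀ ∈ stInt a b)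
    (hμcont : ContinuousOn μ (stInt a b)) (hσcont : ContinuousOn σ (stInt a b))
    (hσpos : ∀ x ∈ stInt a b, 0 < (σ x) ^ 2)
    (hMfin : ∀ x ∈ stInt a b, IntegrableOn (mDen μ σ x₀) (Set.Ioo a x))
    (hsa : Tendsto (sDen μ σ x₀) (𝓝[>] a) atTop)
    (hsMb : Tendsto (fun x => sDen μ σ x₀ x * Mab μ σ x₀ a x) (atB b) atTop)
    (μa : ℝ) (hμa : Tendsto μ (𝓝[>] a) (𝓝 μa))
    :
    ∀ z : ℝ, 0 < z →
      z < sSup ((fun x => 1 / (sDen μ σ x₀ x * Mab μ σ x₀ a x)) '' stInt a b) →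
      ∃ w y : ℝ, a < w ∧ w < y ∧ (y : EReal) < b ∧
        (y - w) / (xiF μ σ x₀ a y - xiF μ σ x₀ a w) = z :=
  statement5_general a b μ σ x₀ hx₀ hμcont hσcont hσpos hMfin hsMb
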